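/- Let g_j = (a/2)^j (2j)!/(2^j j! j!) for a > 0. Then for all j ≥ 5: g_j ≥ (1/j) Σ_{k=1}^{⌊(j-1)/2⌋} Σ_{(j_1,...,j_k): j_1+...+j_k = j-k-1, j_p ≥ 1} (a/2)^{k+1} · ((k+1)(k+2)/2) · Π_{p=1}^k g_{j_p}/(j_p+1). -/

import Mathlib

set_option maxHeartbeats 1000000

open Finset

/-- The coefficients of `(1-at)^{-1/2}`. -/
noncomputable def gcoef (a : ℝ) (j : ℕ) : ℝ :=
  (a / 2) ^ j * ((Nat.factorial (2 * j) : ℝ) /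
    (2 ^ j * Nat.factorial j * Nat.factorial j))

lemma cB_succ (T : ℕ) : Nat.centralBinom (T+1) + 2 * catalan T = 4 * Nat.centralBinom T := by
  apply Nat.eq_of_mul_eq_mul_left (show 0 < T+1 by omega)
  have h1 := Nat.succ_mul_centralBinom_succ T
  have h2 := succ_mul_catalan_eq_centralBinom T
  ring_nf; ring_nf at h1 h2; nlinarith [h1, h2]

lemma partial_sum_eq (T : ℕ) :
    2 * (∑ m ∈ Icc 1 T, catalan m * 4 ^ (T - m)) + Nat.centralBinom (T+1) = 2 * 4 ^ T := by
  induction T with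
  | zero => simp [Nat.centralBinom]
  | succ T ih =>
    rw [Finset.sum_Icc_succ_top (by omega)]
    have hre : ∑ m ∈ Icc 1 T, catalan m * 4 ^ (T + 1 - m)
        = 4 * ∑ m ∈ Icc 1 T, catalan m * 4 ^ (T - m) := by
      rw [Finset.mul_sum]
      refine Finset.sum_congr rfl fun m hm => ?_
      have : T + 1 - m = (T - m) + 1 := by
        simp only [mem_Icc] at hm; omega
      rw [this, pow_succ]; ring
    rw [hre]
    have := cB_succ (T+1)
    simp only [Nat.sub_self, pow_zero, mul_one]
    ring_nf
    ring_nf at ih this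
    omega

lemma partial_sum_le (T : ℕ) : (∑ m ∈ Icc 1 T, catalan m * 4 ^ (T - m)) ≤ 4 ^ T := by
  have := partial_sum_eq T; omega

lemma hsum_le (T : ℕ) : ∑ m ∈ Icc 1 T, (catalan m : ℝ) / 4 ^ m ≤ 1 := by
  have h4 : (0:ℝ) < 4 ^ T := by positivity
  have key : ∑ m ∈ Icc 1 T, (catalan m : ℝ) / 4 ^ m
      = (∑ m ∈ Icc 1 T, (catalan m : ℝ) * 4 ^ (T - m)) / 4 ^ T := by
    rw [Finset.sum_div]
    refine Finset.sum_congr rfl fun m hm => ?_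
    simp only [mem_Icc] at hm
    rw [div_eq_div_iff (by positivity) (by positivity), mul_assoc, ← pow_add]
    congr 2
    omega
  rw [key, div_le_one h4]
  calc ∑ m ∈ Icc 1 T, (catalan m : ℝ) * 4 ^ (T - m)
      = ((∑ m ∈ Icc 1 T, catalan m * 4 ^ (T - m) : ℕ) : ℝ) := by push_cast; ring_nf
    _ ≤ ((4 ^ T : ℕ) : ℝ) := by exact_mod_cast partial_sum_le T
    _ = 4 ^ T := by push_cast; ring

lemma catalan_le_pow (n : ℕ) (hn : 1 ≤ n) : 4 * catalan n ≤ 4 ^ n := by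
  induction n with
  | zero => omega
  | succ n ih =>
    rcases Nat.eq_or_lt_of_le hn with h | h
    · simp [← h, catalan_one]
    · have hn' : 1 ≤ n := by omega
      have key : catalan (n+1) ≤ 4 * catalan n := by
        have h1 := cB_succ n
        have h2 := succ_mul_catalan_eq_centralBinom n
        have h3 := succ_mul_catalan_eq_centralBinom (n+1)
        nlinarith [catalan n, h1, h2, h3]
      calc 4 * catalan (n+1) ≤ 4 * (4 * catalan n) := by omega
        _ ≤ 4 * 4 ^ n := by omega
        _ = 4 ^ (n+1) := by ring

lemma hterm_le (m : ℕ) (hm : 1 ≤ m) : (catalan m : ℝ) / 4 ^ m ≤ 1 / 4 := by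
  rw [div_le_div_iff₀ (by positivity) (by norm_num)]
  have := catalan_le_pow m hm
  calc (catalan m : ℝ) * 4 = (4 * catalan m : ℕ) := by push_cast; ring
    _ ≤ ((4:ℕ) ^ m : ℕ) := by exact_mod_cast this
    _ = 1 * 4 ^ m := by push_cast; ring

lemma hsum_nonneg (m : ℕ) : (0:ℝ) ≤ (catalan m : ℝ) / 4 ^ m := by positivity

lemma gcoef_eq (a : ℝ) (m : ℕ) :
    gcoef a m = a ^ m * (Nat.centralBinom m : ℝ) / 4 ^ m := by
  have hfac : (Nat.factorial (2 * m) : ℝ)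
      = (Nat.centralBinom m : ℝ) * Nat.factorial m * Nat.factorial m := by
    have := Nat.choose_mul_factorial_mul_factorial (Nat.le_mul_of_pos_left m (by norm_num) : m ≤ 2 * m)
    rw [Nat.centralBinom]
    push_cast [← this]
    have h2 : 2 * m - m = m := by omega
    rw [h2]
  unfold gcoef
  rw [hfac]
  have h1 : (Nat.factorial m : ℝ) ≠ 0 := by positivity
  field_simp
  have h2 : ((1:ℝ)/2)^m * 2^m = 1 := by rw [← mul_pow]; norm_num
  rw [show (4:ℝ) = 2*2 by norm_num, mul_pow]; linear_combination (a ^ m * (Nat.centralBinom m : ℝ) * 2 ^ m) * h2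

lemma gcoef_div (a : ℝ) (m : ℕ) :
    gcoef a m / ((m : ℝ) + 1) = a ^ m * ((catalan m : ℝ) / 4 ^ m) := by
  have h := succ_mul_catalan_eq_centralBinom m
  have hcb : (Nat.centralBinom m : ℝ) = ((m : ℝ) + 1) * catalan m := by
    exact_mod_cast congrArg (Nat.cast (R := ℝ)) h.symm
  rw [gcoef_eq, hcb]
  have : ((m:ℝ)+1) ≠ 0 := by positivity
  field_simp

lemma inner_bound (k n : ℕ) (hk : 0 < k) :
    ∑ t ∈ (Finset.Nat.antidiagonalTuple k n).filter (fun t => ∀ p, 0 < t p),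
      ∏ p : Fin k, (catalan (t p) : ℝ) / 4 ^ (t p) ≤ 1 / 4 := by
  obtain ⟨k', rfl⟩ : ∃ k', k = k' + 1 := ⟨k - 1, by omega⟩
  set S := (Finset.Nat.antidiagonalTuple (k'+1) n).filter (fun t => ∀ p, 0 < t p) with hS
  have step1 : ∀ t ∈ S, ∏ p : Fin (k'+1), (catalan (t p) : ℝ) / 4 ^ (t p)
      ≤ (1/4) * ∏ p : Fin k', (catalan (t p.succ) : ℝ) / 4 ^ (t p.succ) := by
    intro t ht
    rw [Fin.prod_univ_succ]
    have ht' := (Finset.mem_filter.mp ht).2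
    exact mul_le_mul_of_nonneg_right (hterm_le _ (ht' 0))
      (Finset.prod_nonneg fun p _ => hsum_nonneg _)
  have step2 : ∑ t ∈ S, ∏ p : Fin k', (catalan (t p.succ) : ℝ) / 4 ^ (t p.succ) ≤ 1 := by
    have hinj : Set.InjOn (fun t : Fin (k'+1) → ℕ => Fin.tail t) S := by
      intro t1 h1 t2 h2 he
      have hm1 : ∑ p, t1 p = n := Finset.Nat.mem_antidiagonalTuple.mp (Finset.mem_filter.mp h1).1
      have hm2 : ∑ p, t2 p = n := Finset.Nat.mem_antidiagonalTuple.mp (Finset.mem_filter.mp h2).1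
      rw [Fin.sum_univ_succ] at hm1 hm2
      have htail : ∀ p : Fin k', t1 p.succ = t2 p.succ := fun p => congrFun he p
      have hsum : ∑ p : Fin k', t1 p.succ = ∑ p : Fin k', t2 p.succ :=
        Finset.sum_congr rfl fun p _ => htail p
      have h0 : t1 0 = t2 0 := by omega
      funext p
      refine Fin.cases h0 htail p
    have hsub : S.image (fun t => Fin.tail t) ⊆ Fintype.piFinset (fun _ : Fin k' => Icc 1 n) := by
      intro u hu
      obtain ⟨t, ht, rfl⟩ := Finset.mem_image.mp hu
      have hmem : ∑ p, t p = n := Finset.Nat.mem_antidiagonalTuple.mp (Finset.mem_filter.mp ht).1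
      have hpos := (Finset.mem_filter.mp ht).2
      rw [Fintype.mem_piFinset]
      intro p
      rw [mem_Icc]
      constructor
      · exact hpos p.succ
      · calc t p.succ ≤ ∑ q, t q := Finset.single_le_sum (fun q _ => Nat.zero_le _) (mem_univ _)
          _ = n := hmem
    calc ∑ t ∈ S, ∏ p : Fin k', (catalan (t p.succ) : ℝ) / 4 ^ (t p.succ)
        = ∑ u ∈ S.image (fun t => Fin.tail t), ∏ p : Fin k', (catalan (u p) : ℝ) / 4 ^ (u p) := by
          rw [Finset.sum_image (fun x hx y hy h => hinj hx hy h)]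
          rfl
      _ ≤ ∑ u ∈ Fintype.piFinset (fun _ : Fin k' => Icc 1 n),
            ∏ p : Fin k', (catalan (u p) : ℝ) / 4 ^ (u p) :=
          Finset.sum_le_sum_of_subset_of_nonneg hsub
            (fun u _ _ => Finset.prod_nonneg fun p _ => hsum_nonneg _)
      _ = ∏ p : Fin k', ∑ m ∈ Icc 1 n, (catalan m : ℝ) / 4 ^ m := by
          rw [Finset.prod_univ_sum (fun _ : Fin k' => Icc 1 n)
            (fun _ m => (catalan m : ℝ) / 4 ^ m)]
      _ ≤ 1 := Finset.prod_le_one (fun p _ => Finset.sum_nonneg fun m _ => hsum_nonneg _)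
            (fun p _ => hsum_le n)
  calc ∑ t ∈ S, ∏ p : Fin (k'+1), (catalan (t p) : ℝ) / 4 ^ (t p)
      ≤ ∑ t ∈ S, (1/4) * ∏ p : Fin k', (catalan (t p.succ) : ℝ) / 4 ^ (t p.succ) :=
        Finset.sum_le_sum step1
    _ = (1/4) * ∑ t ∈ S, ∏ p : Fin k', (catalan (t p.succ) : ℝ) / 4 ^ (t p.succ) := by
        rw [Finset.mul_sum]
    _ ≤ (1/4) * 1 := by linarith [step2]
    _ = 1/4 := by norm_num

lemma weight_sum_le (K : ℕ) :
    ∑ k ∈ Icc 1 K, ((k:ℝ)+1)*((k:ℝ)+2)/2^k ≤ 14 - ((K:ℝ)^2 + 7*K + 14)/2^K := by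
  induction K with
  | zero => simp
  | succ K ih =>
    rw [Finset.sum_Icc_succ_top (by omega)]
    have h2 : (0:ℝ) < 2 ^ K := by positivity
    push_cast
    push_cast at ih
    rw [pow_succ]
    have key : ((K:ℝ)+1+1)*((K:ℝ)+1+2)/(2^K*2)
        = ((K:ℝ)^2+7*K+14)/2^K - (((K:ℝ)+1)^2+7*((K:ℝ)+1)+14)/(2^K*2) := by
      field_simp
      ring
    linarith [ih, key]

/-- Lemma 4 of the paper: for `j ≥ 5`,
`g_j ≥ (1/j) Σ_{k=1}^{⌊(j-1)/2⌋} Σ_{j_1+...+j_k = j-k-1, j_p ≥ 1}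
  (a/2)^{k+1} (k+1)(k+2)/2 ∏_p g_{j_p}/(j_p+1)`. -/
theorem stmt11 (a : ℝ) (ha : 0 < a) (j : ℕ) (hj : 5 ≤ j) :
    gcoef a j ≥ (1 / (j : ℝ)) *
      ∑ k ∈ Finset.Icc 1 ((j - 1) / 2),
        ∑ t ∈ (Finset.Nat.antidiagonalTuple k (j - k - 1)).filter
            (fun t => ∀ p, 0 < t p),
          (a / 2) ^ (k + 1) * (((k : ℝ) + 1) * ((k : ℝ) + 2) / 2) *
            ∏ p : Fin k, gcoef a (t p) / ((t p : ℝ) + 1) := by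
  have hj0 : (0:ℝ) < (j:ℝ) := by positivity
  set K := (j - 1) / 2 with hK
  -- bound each k-term
  have hkterm : ∀ k ∈ Icc 1 K,
      ∑ t ∈ (Finset.Nat.antidiagonalTuple k (j - k - 1)).filter (fun t => ∀ p, 0 < t p),
        (a / 2) ^ (k + 1) * (((k : ℝ) + 1) * ((k : ℝ) + 2) / 2) *
          ∏ p : Fin k, gcoef a (t p) / ((t p : ℝ) + 1)
      ≤ a ^ j * (((k:ℝ)+1)*((k:ℝ)+2)/2^k) / 16 := by
    intro k hk
    simp only [mem_Icc] at hk
    obtain ⟨hk1, hk2⟩ := hk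
    have hkj : k + 1 ≤ j := by omega
    have hn : k + 1 + (j - k - 1) = j := by omega
    -- rewrite the inner sum
    have hrw : ∑ t ∈ (Finset.Nat.antidiagonalTuple k (j - k - 1)).filter (fun t => ∀ p, 0 < t p),
        (a / 2) ^ (k + 1) * (((k : ℝ) + 1) * ((k : ℝ) + 2) / 2) *
          ∏ p : Fin k, gcoef a (t p) / ((t p : ℝ) + 1)
        = (a / 2) ^ (k + 1) * (((k : ℝ) + 1) * ((k : ℝ) + 2) / 2) * a ^ (j - k - 1) *
          ∑ t ∈ (Finset.Nat.antidiagonalTuple k (j - k - 1)).filter (fun t => ∀ p, 0 < t p),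
            ∏ p : Fin k, (catalan (t p) : ℝ) / 4 ^ (t p) := by
      rw [Finset.mul_sum]
      refine Finset.sum_congr rfl fun t ht => ?_
      have hmem : ∑ p, t p = j - k - 1 :=
        Finset.Nat.mem_antidiagonalTuple.mp (Finset.mem_filter.mp ht).1
      have : ∏ p : Fin k, gcoef a (t p) / ((t p : ℝ) + 1)
          = a ^ (j - k - 1) * ∏ p : Fin k, (catalan (t p) : ℝ) / 4 ^ (t p) := by
        calc ∏ p : Fin k, gcoef a (t p) / ((t p : ℝ) + 1)
            = ∏ p : Fin k, a ^ (t p) * ((catalan (t p) : ℝ) / 4 ^ (t p)) :=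
              Finset.prod_congr rfl fun p _ => gcoef_div a (t p)
          _ = (∏ p : Fin k, a ^ (t p)) * ∏ p : Fin k, (catalan (t p) : ℝ) / 4 ^ (t p) :=
              Finset.prod_mul_distrib
          _ = a ^ (j - k - 1) * ∏ p : Fin k, (catalan (t p) : ℝ) / 4 ^ (t p) := by
              rw [Finset.prod_pow_eq_pow_sum, hmem]
      rw [this]
      ring
    rw [hrw]
    have hpos : (0:ℝ) < (a / 2) ^ (k + 1) * (((k : ℝ) + 1) * ((k : ℝ) + 2) / 2) * a ^ (j - k - 1) := by
      positivity
    have hib := inner_bound k (j - k - 1) (by omega)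
    calc (a / 2) ^ (k + 1) * (((k : ℝ) + 1) * ((k : ℝ) + 2) / 2) * a ^ (j - k - 1) *
          ∑ t ∈ (Finset.Nat.antidiagonalTuple k (j - k - 1)).filter (fun t => ∀ p, 0 < t p),
            ∏ p : Fin k, (catalan (t p) : ℝ) / 4 ^ (t p)
        ≤ (a / 2) ^ (k + 1) * (((k : ℝ) + 1) * ((k : ℝ) + 2) / 2) * a ^ (j - k - 1) * (1/4) :=
          mul_le_mul_of_nonneg_left hib (le_of_lt hpos)
      _ = a ^ j * (((k:ℝ)+1)*((k:ℝ)+2)/2^k) / 16 := by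
          have haa : a ^ (k+1) * a ^ (j-k-1) = a ^ j := by rw [← pow_add, hn]
          rw [div_pow]
          calc a ^ (k+1) / 2 ^ (k+1) * (((k:ℝ)+1)*((k:ℝ)+2)/2) * a ^ (j-k-1) * (1/4)
              = (a ^ (k+1) * a ^ (j-k-1)) * (((k:ℝ)+1)*((k:ℝ)+2)) / (2 ^ (k+1) * 8) := by ring
            _ = a ^ j * (((k:ℝ)+1)*((k:ℝ)+2)) / (2 ^ (k+1) * 8) := by rw [haa]
            _ = a ^ j * (((k:ℝ)+1)*((k:ℝ)+2)/2^k) / 16 := by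
                rw [pow_succ]
                have h2 : (2:ℝ) ^ k ≠ 0 := by positivity
                field_simp
                ring
  -- sum the bounds
  have hsum : ∑ k ∈ Icc 1 K,
      ∑ t ∈ (Finset.Nat.antidiagonalTuple k (j - k - 1)).filter (fun t => ∀ p, 0 < t p),
        (a / 2) ^ (k + 1) * (((k : ℝ) + 1) * ((k : ℝ) + 2) / 2) *
          ∏ p : Fin k, gcoef a (t p) / ((t p : ℝ) + 1)
      ≤ (7/8) * a ^ j := by
    calc _ ≤ ∑ k ∈ Icc 1 K, a ^ j * (((k:ℝ)+1)*((k:ℝ)+2)/2^k) / 16 :=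
          Finset.sum_le_sum hkterm
      _ = (a ^ j / 16) * ∑ k ∈ Icc 1 K, ((k:ℝ)+1)*((k:ℝ)+2)/2^k := by
          rw [Finset.mul_sum]; refine Finset.sum_congr rfl fun k _ => ?_; ring
      _ ≤ (a ^ j / 16) * 14 := by
          have h14 : ∑ k ∈ Icc 1 K, ((k:ℝ)+1)*((k:ℝ)+2)/2^k ≤ 14 := by
            have := weight_sum_le K
            have hp : (0:ℝ) ≤ ((K:ℝ)^2 + 7*K + 14)/2^K := by positivity
            linarith
          have hap : (0:ℝ) ≤ a ^ j / 16 := by positivity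
          exact mul_le_mul_of_nonneg_left h14 hap
      _ = (7/8) * a ^ j := by ring
  -- lower bound for LHS
  have hlhs : a ^ j / (j:ℝ) ≤ gcoef a j := by
    rw [gcoef_eq]
    have hcb := Nat.four_pow_lt_mul_centralBinom j (by omega)
    have hcbR : (4:ℝ) ^ j ≤ (j:ℝ) * (Nat.centralBinom j : ℝ) := by
      calc (4:ℝ) ^ j = ((4 ^ j : ℕ) : ℝ) := by push_cast; ring
        _ ≤ ((j * Nat.centralBinom j : ℕ) : ℝ) := by exact_mod_cast hcb.le
        _ = (j:ℝ) * (Nat.centralBinom j : ℝ) := by push_cast; ring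
    rw [div_le_div_iff₀ hj0 (by positivity)]
    calc a ^ j * 4 ^ j ≤ a ^ j * ((j:ℝ) * (Nat.centralBinom j : ℝ)) := by
          exact mul_le_mul_of_nonneg_left hcbR (by positivity)
      _ = a ^ j * (Nat.centralBinom j : ℝ) * (j:ℝ) := by ring
  -- combine
  rw [ge_iff_le]
  calc (1 / (j : ℝ)) * ∑ k ∈ Icc 1 K, _ ≤ (1 / (j:ℝ)) * ((7/8) * a ^ j) := by
        exact mul_le_mul_of_nonneg_left hsum (by positivity)
    _ ≤ (1 / (j:ℝ)) * a ^ j := by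
        have : (0:ℝ) < a ^ j := by positivity
        have h1j : (0:ℝ) ≤ 1 / (j:ℝ) := by positivity
        nlinarith
    _ = a ^ j / (j:ℝ) := by ring
    _ ≤ gcoef a j := hlhs
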